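/- arXiv:1604.01256 — 3 statements merged into one kernel-verified Lean document; each statement's English description precedes it below -/
import Mathlib

section
/- For n ≥ 0, the integral (2/π) ∫_0^π (2cos θ)^n sin²θ dθ equals 0 if n is odd, and equals the Catalan number (1/(m+1))·binom(2m, m) if n = 2m is even. -/
/-!
Writing `sin² = 1 - cos²`, the reduction formula for `∫₀^π cos^(n+2)` gives
`∫₀^π cos^n sin² = (∫₀^π cos^n) / (n + 2)`. The odd Wallis integrals over `[0, π]` vanish and the
even ones are `π * binom(2m, m) / 4^m`, so for `n = 2m` the factor `2^n = 4^m` cancels and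
`2 / (2m + 2) = 1 / (m + 1)` is left.
-/

open Real

theorem integral_cos_pow_add_two_zero_pi (n : ℕ) :
    ∫ x in (0:ℝ)..π, cos x ^ (n + 2) = (n + 1) / (n + 2) * ∫ x in (0:ℝ)..π, cos x ^ n := by
  simp [integral_cos_pow]

theorem integral_cos_pow_odd (m : ℕ) : ∫ x in (0:ℝ)..π, cos x ^ (2 * m + 1) = 0 := by
  simpa using integral_sin_pow_mul_cos_pow_odd (a := 0) (b := π) 0 m

theorem integral_cos_pow_even (m : ℕ) :
    ∫ x in (0:ℝ)..π, cos x ^ (2 * m) = π * m.centralBinom / 4 ^ m := by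
  induction m with
  | zero => simp
  | succ k ih =>
    have hbinom : ((k : ℝ) + 1) * (k + 1).centralBinom = 2 * (2 * k + 1) * k.centralBinom := by
      exact_mod_cast Nat.succ_mul_centralBinom_succ k
    rw [mul_add_one, integral_cos_pow_add_two_zero_pi, ih]
    push_cast
    field_simp
    linear_combination (-2 * 4 ^ k : ℝ) * hbinom

theorem integral_cos_pow_mul_sin_sq (n : ℕ) :
    ∫ x in (0:ℝ)..π, cos x ^ n * sin x ^ 2 = (∫ x in (0:ℝ)..π, cos x ^ n) / (n + 2) := by
  have hsplit : ∫ x in (0:ℝ)..π, cos x ^ n * sin x ^ 2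
      = (∫ x in (0:ℝ)..π, cos x ^ n) - ∫ x in (0:ℝ)..π, cos x ^ (n + 2) := by
    rw [← intervalIntegral.integral_sub (Continuous.intervalIntegrable (by fun_prop) _ _)
      (Continuous.intervalIntegrable (by fun_prop) _ _)]
    congr 1 with x
    rw [sin_sq]
    ring
  rw [hsplit, integral_cos_pow_add_two_zero_pi]
  field_simp
  ring

/-- The `n`-th trace moment of `SU(2)`: `(2/π) ∫_0^π (2 cos θ)^n sin² θ dθ` is `0`
for `n` odd and the Catalan number `(1/(m+1)) * binom(2m, m)` for `n = 2m` even. -/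
theorem trace_moment_SU2 (n : ℕ) :
    (2 / π) * ∫ θ in (0:ℝ)..π, (2 * Real.cos θ) ^ n * Real.sin θ ^ 2 =
      if Odd n then 0 else (1 / ((n / 2 : ℕ) + 1 : ℝ)) * (n.choose (n / 2) : ℝ) := by
  have hmoment : (2 / π) * ∫ θ in (0:ℝ)..π, (2 * cos θ) ^ n * sin θ ^ 2
      = 2 * 2 ^ n / (π * (n + 2)) * ∫ θ in (0:ℝ)..π, cos θ ^ n := by
    simp_rw [mul_pow, mul_assoc]
    rw [intervalIntegral.integral_const_mul, integral_cos_pow_mul_sin_sq]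
    field_simp
  rw [hmoment]
  rcases Nat.even_or_odd' n with ⟨m, rfl | rfl⟩
  · have hhalf : 2 * m / 2 = m := by omega
    rw [if_neg (Nat.not_odd_iff_even.mpr (even_two_mul m)), hhalf, integral_cos_pow_even,
      ← Nat.centralBinom_eq_two_mul_choose, pow_mul]
    push_cast
    field_simp
    ring
  · simp [integral_cos_pow_odd]
end

section
/- Define b_n = binom(n, n/2) if n is even and b_n = 0 if n is odd. Then for all n ≥ 0, ∑_{r=0}^{n} binom(n, r) · b_r · b_{n−r} = b_n². -/
/-- The central binomial sequence interleaved with zeros. -/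
def bSeq (n : ℕ) : ℕ := if Even n then n.choose (n / 2) else 0

lemma bSeq_two_mul (k : ℕ) : bSeq (2 * k) = (2 * k).choose k := by
  simp [bSeq, even_two_mul k, Nat.mul_div_cancel_left _ (by norm_num : 0 < 2)]

lemma bSeq_odd {n : ℕ} (h : ¬ Even n) : bSeq n = 0 := by simp [bSeq, h]

lemma sum_choose_sq (m : ℕ) :
    ∑ k ∈ Finset.range (m + 1), m.choose k * m.choose k = (2 * m).choose m := by
  rw [two_mul, Nat.add_choose_eq, Finset.Nat.sum_antidiagonal_eq_sum_range_succ_mk]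
  refine Finset.sum_congr rfl fun k hk => ?_
  have hkm : k ≤ m := by simpa [Nat.lt_succ_iff] using hk
  simp only []
  rw [Nat.choose_symm hkm]

lemma key (m k : ℕ) (hk : k ≤ m) :
    (2 * m).choose (2 * k) * (2 * k).choose k * (2 * (m - k)).choose (m - k)
      = (2 * m).choose m * (m.choose k * m.choose k) := by
  have h2k : 2 * k ≤ 2 * m := by omega
  have hA := Nat.choose_mul_factorial_mul_factorial h2k
  have hB := Nat.choose_mul_factorial_mul_factorial (by omega : k ≤ 2 * k)
  have hC := Nat.choose_mul_factorial_mul_factorial (by omega : m - k ≤ 2 * (m - k))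
  have hD := Nat.choose_mul_factorial_mul_factorial (by omega : m ≤ 2 * m)
  have hE := Nat.choose_mul_factorial_mul_factorial hk
  have e1 : 2 * k - k = k := by omega
  have e2 : 2 * (m - k) - (m - k) = m - k := by omega
  have e3 : 2 * m - 2 * k = 2 * (m - k) := by omega
  have e4 : 2 * m - m = m := by omega
  rw [e1] at hB; rw [e2] at hC; rw [e3] at hA; rw [e4] at hD
  have hpos : 0 < k.factorial * k.factorial * ((m - k).factorial * (m - k).factorial) :=
    by positivity
  apply Nat.eq_of_mul_eq_mul_right hpos
  calc (2 * m).choose (2 * k) * (2 * k).choose k * (2 * (m - k)).choose (m - k) *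
        (k.factorial * k.factorial * ((m - k).factorial * (m - k).factorial))
      = (2 * m).choose (2 * k) * ((2 * k).choose k * k.factorial * k.factorial) *
        ((2 * (m - k)).choose (m - k) * (m - k).factorial * (m - k).factorial) := by ring
    _ = (2 * m).choose (2 * k) * (2 * k).factorial * (2 * (m - k)).factorial := by
        rw [hB, hC]
    _ = (2 * m).factorial := hA
    _ = (2 * m).choose m * m.factorial * m.factorial := hD.symm
    _ = (2 * m).choose m * (m.choose k * k.factorial * (m - k).factorial) *
        (m.choose k * k.factorial * (m - k).factorial) := by rw [hE]
    _ = (2 * m).choose m * (m.choose k * m.choose k) *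
        (k.factorial * k.factorial * ((m - k).factorial * (m - k).factorial)) := by ring

/-- Binomial convolution identity `∑_{r=0}^n binom(n,r) b_r b_{n-r} = b_n²`. -/
theorem binomial_convolution_bSeq (n : ℕ) :
    ∑ r ∈ Finset.range (n + 1), n.choose r * bSeq r * bSeq (n - r) = bSeq n ^ 2 := by
  by_cases hn : Even n
  · obtain ⟨m, rfl⟩ : ∃ m, n = 2 * m := by
      obtain ⟨m, hm⟩ := hn; exact ⟨m, by omega⟩
    have hzero : ∀ r ∈ Finset.range (2 * m + 1),
        ¬ Even r → (2 * m).choose r * bSeq r * bSeq (2 * m - r) = 0 := by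
      intro r _ hr; rw [bSeq_odd hr]; ring
    rw [← Finset.sum_filter_add_sum_filter_not (Finset.range (2 * m + 1)) (fun r => Even r)]
    rw [Finset.sum_eq_zero (fun r hr => hzero r (Finset.mem_filter.mp hr).1
        (Finset.mem_filter.mp hr).2), add_zero]
    have himg : Finset.filter (fun r => Even r) (Finset.range (2 * m + 1))
        = (Finset.range (m + 1)).image (fun k => 2 * k) := by
      ext r
      simp only [Finset.mem_filter, Finset.mem_range, Finset.mem_image, Nat.even_iff]
      constructor
      · rintro ⟨h1, h2⟩; exact ⟨r / 2, by omega, by omega⟩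
      · rintro ⟨k, hk, rfl⟩; omega
    rw [himg, Finset.sum_image (fun a _ b _ h => by omega)]
    have : ∀ k ∈ Finset.range (m + 1),
        (2 * m).choose (2 * k) * bSeq (2 * k) * bSeq (2 * m - 2 * k)
          = (2 * m).choose m * (m.choose k * m.choose k) := by
      intro k hk
      have hkm : k ≤ m := by simpa [Nat.lt_succ_iff] using hk
      have e : 2 * m - 2 * k = 2 * (m - k) := by omega
      rw [e, bSeq_two_mul, bSeq_two_mul, key m k hkm]
    rw [Finset.sum_congr rfl this, ← Finset.mul_sum, sum_choose_sq, bSeq_two_mul, sq]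
  · have hzero : ∀ r ∈ Finset.range (n + 1),
        (n.choose r) * bSeq r * bSeq (n - r) = 0 := by
      intro r hr
      by_cases h : Even r
      · have hrn : r ≤ n := by simpa [Nat.lt_succ_iff] using hr
        have : ¬ Even (n - r) := by
          rw [Nat.even_iff] at h ⊢; rw [Nat.even_iff] at hn; omega
        rw [bSeq_odd this]; ring
      · rw [bSeq_odd h]; ring
    rw [Finset.sum_eq_zero hzero, bSeq_odd hn]; ring
end

section
/- Define c_n = (2/(n+2))·binom(n, n/2) if n is even and c_n = 0 if n is odd (so c_{2m} is the m-th Catalan number). Then for all n ≥ 0, ∑_{r=0}^{n} binom(n, r) · c_r · c_{n−r} = c_n · c_{n+2}. -/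
/-- The Catalan sequence interleaved with zeros: `c n = (2/(n+2)) * binom(n, n/2)`
for `n` even and `c n = 0` for `n` odd. -/
noncomputable def cSeq (n : ℕ) : ℚ :=
  if Even n then (2 / ((n : ℚ) + 2)) * (n.choose (n / 2) : ℚ) else 0

/-!
For odd `n` every term has an odd index, so everything vanishes. For `n = 2m` only even `r = 2k`
contribute, and since `c (2k) = (2k)! / (k! (k+1)!)`, the term of index `2k` equals
`(2m)! / (m! (m+2)!) * binom(m, k) * binom(m+2, k+1)`. Vandermonde's identity sums the last
factors to `binom(2m+2, m+1)`, and `(2m)! / (m! (m+2)!) * binom(2m+2, m+1) = c (2m) * c (2m+2)`.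
-/

open Finset

theorem Nat.sum_range_choose_mul_choose_succ (m : ℕ) :
    ∑ k ∈ range (m + 1), m.choose k * (m + 2).choose (k + 1) = (2 * m + 2).choose (m + 1) := by
  rw [show 2 * m + 2 = m + (m + 2) by ring, Nat.add_choose_eq,
    Nat.sum_antidiagonal_eq_sum_range_succ_mk, sum_range_succ _ (m + 1), Nat.choose_succ_self,
    zero_mul, add_zero]
  refine sum_congr rfl fun k hk => ?_
  have hkm := mem_range_succ_iff.mp hk
  rw [Nat.choose_symm_of_eq_add (show m + 2 = (k + 1) + (m + 1 - k) by omega)]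

theorem Finset.sum_range_two_mul_add_one_of_odd_eq_zero {M : Type*} [AddCommMonoid M]
    (f : ℕ → M) (hf : ∀ r, Odd r → f r = 0) (m : ℕ) :
    ∑ r ∈ range (2 * m + 1), f r = ∑ k ∈ range (m + 1), f (2 * k) := by
  induction m with
  | zero => simp
  | succ m ih =>
    rw [show 2 * (m + 1) + 1 = 2 * m + 1 + 1 + 1 by ring, sum_range_succ, sum_range_succ, ih,
      hf _ (odd_two_mul_add_one m), add_zero, sum_range_succ _ (m + 1)]
    rfl

theorem cSeq_of_odd {n : ℕ} (hn : Odd n) : cSeq n = 0 :=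
  if_neg (Nat.not_even_iff_odd.mpr hn)

theorem cSeq_two_mul (k : ℕ) :
    cSeq (2 * k) = ((2 * k).factorial : ℚ) / (k.factorial * (k + 1).factorial) := by
  rw [cSeq, if_pos (even_two_mul k), Nat.mul_div_cancel_left k two_pos,
    Nat.cast_choose ℚ (by omega : k ≤ 2 * k), show 2 * k - k = k by omega,
    Nat.factorial_succ]
  push_cast
  field_simp

theorem cSeq_mul_cSeq_sub_of_odd {n r : ℕ} (hn : Odd n) (hr : r ≤ n) :
    cSeq r * cSeq (n - r) = 0 := by
  rcases Nat.even_or_odd r with hr' | hr'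
  · rw [cSeq_of_odd (Nat.Odd.sub_even hr hn hr'), mul_zero]
  · rw [cSeq_of_odd hr', zero_mul]

theorem choose_mul_cSeq_mul_cSeq (k j : ℕ) :
    ((2 * (k + j)).choose (2 * k) : ℚ) * cSeq (2 * k) * cSeq (2 * j) =
      ((2 * (k + j)).factorial : ℚ) / ((k + j).factorial * (k + j + 2).factorial) *
        ((k + j).choose k * (k + j + 2).choose (k + 1) : ℕ) := by
  rw [cSeq_two_mul, cSeq_two_mul, Nat.cast_mul,
    Nat.cast_choose ℚ (by omega : 2 * k ≤ 2 * (k + j)), Nat.cast_choose ℚ (by omega : k ≤ k + j),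
    Nat.cast_choose ℚ (by omega : k + 1 ≤ k + j + 2),
    show 2 * (k + j) - 2 * k = 2 * j by omega, Nat.add_sub_cancel_left,
    show k + j + 2 - (k + 1) = j + 1 by omega]
  field_simp

theorem cSeq_two_mul_mul_cSeq_two_mul_add_two (m : ℕ) :
    cSeq (2 * m) * cSeq (2 * m + 2) =
      ((2 * m).factorial : ℚ) / (m.factorial * (m + 2).factorial) *
        (2 * m + 2).choose (m + 1) := by
  rw [show 2 * m + 2 = 2 * (m + 1) by ring, cSeq_two_mul, cSeq_two_mul,
    Nat.cast_choose ℚ (by omega : m + 1 ≤ 2 * (m + 1)),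
    show 2 * (m + 1) - (m + 1) = m + 1 by omega]
  field_simp

/-- Binomial convolution identity `∑_{r=0}^n binom(n,r) c_r c_{n-r} = c_n c_{n+2}`. -/
theorem binomial_convolution_cSeq (n : ℕ) :
    ∑ r ∈ Finset.range (n + 1), (n.choose r : ℚ) * cSeq r * cSeq (n - r) =
      cSeq n * cSeq (n + 2) := by
  rcases Nat.even_or_odd' n with ⟨m, rfl | rfl⟩
  · rw [sum_range_two_mul_add_one_of_odd_eq_zero _ (fun r hr => by rw [cSeq_of_odd hr]; ring),
      cSeq_two_mul_mul_cSeq_two_mul_add_two, ← Nat.sum_range_choose_mul_choose_succ,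
      Nat.cast_sum, mul_sum]
    refine sum_congr rfl fun k hk => ?_
    obtain ⟨j, rfl⟩ := Nat.exists_eq_add_of_le (mem_range_succ_iff.mp hk)
    rw [show 2 * (k + j) - 2 * k = 2 * j by omega, choose_mul_cSeq_mul_cSeq]
  · rw [cSeq_of_odd (odd_two_mul_add_one m), zero_mul]
    exact sum_eq_zero fun r hr => by
      rw [mul_assoc, cSeq_mul_cSeq_sub_of_odd (odd_two_mul_add_one m)
        (mem_range_succ_iff.mp hr), mul_zero]
end
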